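/- Let l, T ∈ ℕ, let Q̂ = (−1/3, …, −1/3) + [−T, 2T]^l ⊆ ℝ^l, and let φ : ℤ^l → ℤ^l be a permutation such that ‖φ(x) − x‖ ≤ T for all x ∈ ℤ^l. Then there exist permutations σ₁, σ₂, …, σ_{3^l + 1} of (1/2)ℤ^l such that: (i) for each k ∈ {1, …, 3^l + 1} there exists p_k ∈ {−1, 0, 1}^l such that for every z ∈ ℤ^l the restriction of σ_k to (1/2)ℤ^l ∩ (Q̂ + T(3z + p_k)) is a permutation of (1/2)ℤ^l ∩ (Q̂ + T(3z + p_k)); (ii) φ equals the restriction to ℤ^l of the composition σ_{3^l + 1} ∘ σ_{3^l} ∘ ⋯ ∘ σ₁. -/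

import Mathlib

/-!
Let `v = (1/2, …, 1/2)`. Since `|xᵢ - φ(x)ᵢ| ≤ T`, both
coordinates lie in a common integer block `[T s, T s + 3T)` (take `s = ⌊min(xᵢ, φ(x)ᵢ) / T⌋`);
the residues of these block indices mod 3 form the pattern `c(x) ∈ (ℤ/3)^l`. For each of the `3^l`
patterns `c`, let `σ_c` be the involution of `(1/2)ℤ^l` exchanging every `x ∈ ℤ^l` of pattern `c`
with the non-integral point `φ(x) + v`. Blocks whose indices are congruent mod 3 are disjoint, and
they are the traces on `ℤ` of the tiles `Q̂ + T(3z + q)` with `q ≡ c + 1`, so `σ_c` preserves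
each of these tiles. Running through all patterns sends `x` to `φ(x) + v`: only the swap of `x`'s
own pattern moves it, and no later swap moves `φ(x) + v`. A last swap `y ↔ y + v` over all of
`ℤ^l`, which preserves the tiles with offset `0`, returns `φ(x) + v` to `φ(x)`.
-/

noncomputable section

/-- The integer lattice `ℤ^l ⊆ ℝ^l`. -/
def intLat (l : ℕ) : Set (EuclideanSpace ℝ (Fin l)) := {x | ∀ i, ∃ n : ℤ, x i = n}

/-- The half-integer lattice `(1/2)ℤ^l ⊆ ℝ^l`. -/
def halfLat (l : ℕ) : Set (EuclideanSpace ℝ (Fin l)) :=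
  {x | ∀ i, ∃ n : ℤ, x i = (n : ℝ) / 2}

/-- The translate `Q̂ + T(3z + q)` of the cube
`Q̂ = (-1/3, …, -1/3) + [-T, 2T]^l`. -/
def tileSet (l T : ℕ) (z q : Fin l → ℝ) : Set (EuclideanSpace ℝ (Fin l)) :=
  {x | ∀ i, x i + 1 / 3 - (T : ℝ) * (3 * z i + q i) ∈ Set.Icc (-(T : ℝ)) (2 * T)}

open Set

theorem foldl_eq_self_of_forall_mem {α β : Type*} {f : α → β → α} {a : α} {L : List β}
    (h : ∀ b ∈ L, f a b = a) : L.foldl f a = a := by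
  induction L with
  | nil => rfl
  | cons b L ih =>
    rw [List.foldl_cons, h b List.mem_cons_self]
    exact ih fun b' hb' => h b' (List.mem_cons_of_mem b hb')

theorem foldl_ofFn_eq_of_forall_ne {α : Type*} {n : ℕ} (σ : Fin n → α → α) {a b : α} (k₀ : Fin n)
    (ha : ∀ k, k ≠ k₀ → σ k a = a) (hab : σ k₀ a = b) (hb : ∀ k, k ≠ k₀ → σ k b = b) :
    (List.ofFn σ).foldl (fun y g => g y) a = b := by
  induction n with
  | zero => exact k₀.elim0
  | succ n ih =>
    rw [List.ofFn_succ, List.foldl_cons]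
    cases k₀ using Fin.cases with
    | zero =>
      rw [hab]
      refine foldl_eq_self_of_forall_mem fun g hg => ?_
      obtain ⟨k, rfl⟩ := List.mem_ofFn.mp hg
      exact hb _ (Fin.succ_ne_zero k)
    | succ k₀ =>
      rw [ha 0 (Fin.succ_ne_zero k₀).symm]
      exact ih _ k₀ (fun k hk => ha _ (Fin.succ_injective _ |>.ne hk)) hab
        (fun k hk => hb _ (Fin.succ_injective _ |>.ne hk))

section ShiftSwap

variable {G : Type*} [AddGroup G]

open Classical in
def shiftSwap (L : Set G) (v : G) (f g : G → G) (A : Set G) : G → G := fun y =>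
  if y ∈ L ∧ y ∈ A then f y + v
  else if y - v ∈ L ∧ g (y - v) ∈ A then g (y - v)
  else y

variable {L A S : Set G} {v : G} {f g : G → G}

theorem shiftSwap_of_mem {x : G} (hx : x ∈ L) (hA : x ∈ A) :
    shiftSwap L v f g A x = f x + v := by
  simp [shiftSwap, hx, hA]

theorem shiftSwap_of_notMem (hv : ∀ x ∈ L, x + v ∉ L) {x : G} (hx : x ∈ L) (hA : x ∉ A) :
    shiftSwap L v f g A x = x := by
  have : x - v ∉ L := fun h => hv _ h (by simpa using hx)
  simp [shiftSwap, hA, this]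

theorem shiftSwap_add_of_notMem (hv : ∀ x ∈ L, x + v ∉ L) (hf : MapsTo f L L)
    (hgf : LeftInvOn g f L) {x : G} (hx : x ∈ L) (hA : x ∉ A) :
    shiftSwap L v f g A (f x + v) = f x + v := by
  simp [shiftSwap, hv _ (hf hx), hgf hx, hA]

theorem shiftSwap_add_of_mem (hv : ∀ x ∈ L, x + v ∉ L) (hf : MapsTo f L L)
    (hgf : LeftInvOn g f L) {x : G} (hx : x ∈ L) (hA : x ∈ A) :
    shiftSwap L v f g A (f x + v) = x := by
  simp [shiftSwap, hv _ (hf hx), hf hx, hgf hx, hA]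

theorem shiftSwap_involutive (hv : ∀ x ∈ L, x + v ∉ L) (hf : MapsTo f L L) (hg : MapsTo g L L)
    (hgf : InvOn g f L L) : Function.Involutive (shiftSwap L v f g A) := by
  intro y
  by_cases h₁ : y ∈ L ∧ y ∈ A
  · rw [shiftSwap_of_mem h₁.1 h₁.2, shiftSwap_add_of_mem hv hf hgf.1 h₁.1 h₁.2]
  by_cases h₂ : y - v ∈ L ∧ g (y - v) ∈ A
  · have hy : shiftSwap L v f g A y = g (y - v) := by simp only [shiftSwap, if_neg h₁, if_pos h₂]
    rw [hy, shiftSwap_of_mem (hg h₂.1) h₂.2, hgf.2 h₂.1, sub_add_cancel]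
  · have hy : shiftSwap L v f g A y = y := by simp only [shiftSwap, if_neg h₁, if_neg h₂]
    rw [hy, hy]

theorem shiftSwap_mapsTo (hg : MapsTo g L L) (hfg : RightInvOn g f L)
    (hS : ∀ x ∈ L, x ∈ A → (x ∈ S ↔ f x + v ∈ S)) : MapsTo (shiftSwap L v f g A) S S := by
  intro y hy
  unfold shiftSwap
  split_ifs with h₁ h₂
  · exact (hS y h₁.1 h₁.2).1 hy
  · refine (hS _ (hg h₂.1) h₂.2).2 ?_
    rwa [hfg h₂.1, sub_add_cancel]
  · exact hy

theorem shiftSwap_bijOn (hv : ∀ x ∈ L, x + v ∉ L) (hf : MapsTo f L L) (hg : MapsTo g L L)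
    (hgf : InvOn g f L L) (hS : ∀ x ∈ L, x ∈ A → (x ∈ S ↔ f x + v ∈ S)) :
    BijOn (shiftSwap L v f g A) S S :=
  have hinv := shiftSwap_involutive (A := A) hv hf hg hgf
  InvOn.bijOn ⟨fun y _ => hinv y, fun y _ => hinv y⟩ (shiftSwap_mapsTo hg hgf.2 hS)
    (shiftSwap_mapsTo hg hgf.2 hS)

theorem foldl_ofFn_shiftSwap_fiber (hv : ∀ x ∈ L, x + v ∉ L) (hf : MapsTo f L L)
    (hgf : LeftInvOn g f L) {ι : Type*} (P : G → ι) {n : ℕ} (e : Fin n ≃ ι) {x : G}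
    (hx : x ∈ L) :
    (List.ofFn fun k => shiftSwap L v f g {y | P y = e k}).foldl (fun y s => s y) x = f x + v := by
  have hne : ∀ k, k ≠ e.symm (P x) → x ∉ {y | P y = e k} := fun k hk hPx =>
    hk (by rw [hPx, Equiv.symm_apply_apply])
  refine foldl_ofFn_eq_of_forall_ne _ (e.symm (P x)) (fun k hk => ?_) ?_ (fun k hk => ?_)
  · exact shiftSwap_of_notMem hv hx (hne k hk)
  · exact shiftSwap_of_mem hx (by simp)
  · exact shiftSwap_add_of_notMem hv hf hgf hx (hne k hk)

end ShiftSwap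

section Block

variable {T : ℕ}

def block (T : ℕ) (s : ℤ) : Set ℤ := Ico (T * s) (T * (s + 3))

def blockIndex (T : ℕ) (m m' : ℤ) : ℤ := min m m' / T

theorem mem_block_blockIndex (hT : 0 < T) {m m' : ℤ} (h : |m - m'| ≤ T) :
    m ∈ block T (blockIndex T m m') ∧ m' ∈ block T (blockIndex T m m') := by
  have hT' : (0 : ℤ) < T := by exact_mod_cast hT
  have h₁ := Int.ediv_mul_le (min m m') hT'.ne'
  have h₂ := Int.lt_ediv_add_one_mul_self (min m m') hT'
  have hmin : min m m' ≤ m ∧ min m m' ≤ m' ∧ m ≤ min m m' + T ∧ m' ≤ min m m' + T := by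
    have := abs_le.mp h
    omega
  simp only [block, blockIndex, mem_Ico]
  refine ⟨⟨?_, ?_⟩, ?_, ?_⟩ <;> linarith

theorem eq_of_mem_block_of_modEq {m s t : ℤ} (hs : m ∈ block T s) (ht : m ∈ block T t)
    (hst : s ≡ t [ZMOD 3]) : s = t := by
  have lt_add_three : ∀ {a b : ℤ}, T * a ≤ m → m < T * (b + 3) → a < b + 3 := fun ha hb =>
    lt_of_mul_lt_mul_left (ha.trans_lt hb) (Int.natCast_nonneg T)
  have := lt_add_three hs.1 ht.2
  have := lt_add_three ht.1 hs.2
  unfold Int.ModEq at hst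
  omega

theorem mem_block_iff_of_mem_block {m m' s t : ℤ} (hm : m ∈ block T s)
    (hm' : m' ∈ block T s) (ht : t ≡ s [ZMOD 3]) : m ∈ block T t ↔ m' ∈ block T t :=
  ⟨fun h => eq_of_mem_block_of_modEq h hm ht ▸ hm', fun h => eq_of_mem_block_of_modEq h hm' ht ▸ hm⟩

theorem add_mem_Icc_iff_mem_block {m u : ℤ} {δ : ℝ} (hδ₀ : 0 ≤ δ) (hδ₁ : δ < 2 / 3) :
    (m + δ + 1 / 3 - T * u : ℝ) ∈ Icc (-(T : ℝ)) (2 * T) ↔ m ∈ block T (u - 1) := by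
  simp only [mem_Icc, block, mem_Ico]
  constructor
  · rintro ⟨h₁, h₂⟩
    constructor
    · have : ((T * (u - 1) : ℤ) : ℝ) < (m + 1 : ℤ) := by push_cast; linarith
      exact Int.lt_add_one_iff.mp (by exact_mod_cast this)
    · have : (m : ℝ) < (T * (u - 1 + 3) : ℤ) := by push_cast; linarith
      exact_mod_cast this
  · rintro ⟨h₁, h₂⟩
    have h₁' : ((T * (u - 1) : ℤ) : ℝ) ≤ m := by exact_mod_cast h₁
    have h₂' : ((m + 1 : ℤ) : ℝ) ≤ (T * (u - 1 + 3) : ℤ) := by exact_mod_cast h₂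
    push_cast at h₁' h₂'
    constructor <;> linarith

end Block

section Lattice

variable {l T : ℕ}

def halfDiag (l : ℕ) : EuclideanSpace ℝ (Fin l) := WithLp.toLp 2 fun _ => 1 / 2

theorem halfDiag_apply (i : Fin l) : halfDiag l i = 1 / 2 := rfl

theorem intCast_floor_of_mem_intLat {x : EuclideanSpace ℝ (Fin l)} (hx : x ∈ intLat l)
    (i : Fin l) : (⌊x i⌋ : ℝ) = x i := by
  obtain ⟨n, hn⟩ := hx i
  rw [hn, Int.floor_intCast]

theorem intLat_subset_halfLat : intLat l ⊆ halfLat l := fun x hx i => by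
  obtain ⟨n, hn⟩ := hx i
  exact ⟨2 * n, by rw [hn]; push_cast; ring⟩

theorem add_halfDiag_mem_halfLat {x : EuclideanSpace ℝ (Fin l)} (hx : x ∈ intLat l) :
    x + halfDiag l ∈ halfLat l := fun i => by
  obtain ⟨n, hn⟩ := hx i
  exact ⟨2 * n + 1, by rw [PiLp.add_apply, hn, halfDiag_apply]; push_cast; ring⟩

theorem add_halfDiag_notMem_intLat (hl : 0 < l) :
    ∀ x ∈ intLat l, x + halfDiag l ∉ intLat l := fun x hx hmem => by
  obtain ⟨n, hn⟩ := hx ⟨0, hl⟩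
  obtain ⟨m, hm⟩ := hmem ⟨0, hl⟩
  rw [PiLp.add_apply, hn, halfDiag_apply] at hm
  have : (2 * m : ℤ) = 2 * n + 1 := by exact_mod_cast (by linarith : (2 * m : ℝ) = 2 * n + 1)
  omega

theorem abs_floor_sub_floor_le {x y : EuclideanSpace ℝ (Fin l)} (hx : x ∈ intLat l)
    (hy : y ∈ intLat l) (h : dist x y ≤ T) (i : Fin l) : |⌊x i⌋ - ⌊y i⌋| ≤ T := by
  have := (PiLp.dist_apply_le x y i).trans h
  rw [Real.dist_eq, ← intCast_floor_of_mem_intLat hx, ← intCast_floor_of_mem_intLat hy] at this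
  exact_mod_cast this

theorem mem_tileSet_iff_forall_mem_block {x : EuclideanSpace ℝ (Fin l)} (hx : x ∈ intLat l)
    (z q : Fin l → ℤ) :
    x ∈ tileSet l T (fun i => z i) (fun i => q i) ↔ ∀ i, ⌊x i⌋ ∈ block T (3 * z i + q i - 1) := by
  refine forall_congr' fun i => ?_
  obtain ⟨n, hn⟩ := hx i
  rw [hn, Int.floor_intCast, ← add_mem_Icc_iff_mem_block le_rfl (by norm_num)]
  push_cast
  ring_nf

theorem add_halfDiag_mem_tileSet_iff {x : EuclideanSpace ℝ (Fin l)} (hx : x ∈ intLat l)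
    (z q : Fin l → ℤ) :
    x + halfDiag l ∈ tileSet l T (fun i => z i) (fun i => q i) ↔
      ∀ i, ⌊x i⌋ ∈ block T (3 * z i + q i - 1) := by
  refine forall_congr' fun i => ?_
  obtain ⟨n, hn⟩ := hx i
  rw [PiLp.add_apply, hn, Int.floor_intCast, halfDiag_apply,
    ← add_mem_Icc_iff_mem_block (by norm_num) (by norm_num : (1 / 2 : ℝ) < 2 / 3)]
  push_cast
  ring_nf

end Lattice

section Pattern

variable {l T : ℕ}

def blockPattern (T : ℕ) (φ : EuclideanSpace ℝ (Fin l) → EuclideanSpace ℝ (Fin l))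
    (x : EuclideanSpace ℝ (Fin l)) : Fin l → ZMod 3 :=
  fun i => (blockIndex T ⌊x i⌋ ⌊φ x i⌋ : ZMod 3)

/-- `tileSet l T z q` meets `ℤ` in `block T (3 * z i + q i - 1)` along coordinate `i`, hence
the `+ 1`: these are the tiles whose blocks have index `≡ c i` mod 3. -/
def tileOffset (c : Fin l → ZMod 3) : Fin l → ℤ := fun i => (c i + 1).valMinAbs

theorem tileOffset_mem (c : Fin l → ZMod 3) (i : Fin l) :
    tileOffset c i = -1 ∨ tileOffset c i = 0 ∨ tileOffset c i = 1 := by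
  have : ∀ a : ZMod 3, a.valMinAbs = -1 ∨ a.valMinAbs = 0 ∨ a.valMinAbs = 1 := by decide
  exact this _

theorem mem_tileSet_iff_map_add_halfDiag_mem (hT : 0 < T)
    {φ : EuclideanSpace ℝ (Fin l) → EuclideanSpace ℝ (Fin l)} {x : EuclideanSpace ℝ (Fin l)}
    (hx : x ∈ intLat l) (hφx : φ x ∈ intLat l) (hdist : dist (φ x) x ≤ T) (z : Fin l → ℤ) :
    x ∈ tileSet l T (fun i => z i) (fun i => tileOffset (blockPattern T φ x) i) ↔
      φ x + halfDiag l ∈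
        tileSet l T (fun i => z i) (fun i => tileOffset (blockPattern T φ x) i) := by
  rw [mem_tileSet_iff_forall_mem_block hx, add_halfDiag_mem_tileSet_iff hφx]
  refine forall_congr' fun i => ?_
  have hblock := mem_block_blockIndex hT
    (abs_floor_sub_floor_le hx hφx ((dist_comm x (φ x)).trans_le hdist) i)
  refine mem_block_iff_of_mem_block hblock.1 hblock.2 ?_
  refine (ZMod.intCast_eq_intCast_iff _ _ 3).mp ?_
  have h3 : (3 : ZMod 3) = 0 := rfl
  push_cast [tileOffset, blockPattern, ZMod.coe_valMinAbs, h3]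
  ring

end Pattern

def IsTilewisePerm (l T : ℕ) (s : EuclideanSpace ℝ (Fin l) → EuclideanSpace ℝ (Fin l)) : Prop :=
  BijOn s (halfLat l) (halfLat l) ∧
    ∃ q : Fin l → ℝ, (∀ i, q i = -1 ∨ q i = 0 ∨ q i = 1) ∧
      ∀ z : Fin l → ℝ, (∀ i, ∃ n : ℤ, z i = n) →
        BijOn s (halfLat l ∩ tileSet l T z q) (halfLat l ∩ tileSet l T z q)

def patternSwaps (l T : ℕ) (φ : EuclideanSpace ℝ (Fin l) → EuclideanSpace ℝ (Fin l)) :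
    Fin (3 ^ l + 1) → EuclideanSpace ℝ (Fin l) → EuclideanSpace ℝ (Fin l) :=
  Fin.snoc (α := fun _ => EuclideanSpace ℝ (Fin l) → EuclideanSpace ℝ (Fin l))
    (fun k => shiftSwap (intLat l) (halfDiag l) φ (Function.invFunOn φ (intLat l))
      {x | blockPattern T φ x = (Fintype.equivFinOfCardEq (by simp)).symm k})
    (shiftSwap (intLat l) (halfDiag l) id id univ)

section TilewisePerm

variable {l T : ℕ} {φ f g : EuclideanSpace ℝ (Fin l) → EuclideanSpace ℝ (Fin l)}

theorem isTilewisePerm_shiftSwap (hl : 0 < l) (hf : MapsTo f (intLat l) (intLat l))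
    (hg : MapsTo g (intLat l) (intLat l)) (hgf : InvOn g f (intLat l) (intLat l))
    {A : Set (EuclideanSpace ℝ (Fin l))} (q : Fin l → ℤ) (hq : ∀ i, q i = -1 ∨ q i = 0 ∨ q i = 1)
    (hA : ∀ z : Fin l → ℤ, ∀ x ∈ intLat l, x ∈ A →
      (x ∈ tileSet l T (fun i => z i) (fun i => q i) ↔
        f x + halfDiag l ∈ tileSet l T (fun i => z i) (fun i => q i))) :
    IsTilewisePerm l T (shiftSwap (intLat l) (halfDiag l) f g A) := by
  have hv := add_halfDiag_notMem_intLat hl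
  have hhalf : ∀ x ∈ intLat l, (x ∈ halfLat l ↔ f x + halfDiag l ∈ halfLat l) := fun x hx =>
    iff_of_true (intLat_subset_halfLat hx) (add_halfDiag_mem_halfLat (hf hx))
  refine ⟨shiftSwap_bijOn hv hf hg hgf fun x hx _ => hhalf x hx, fun i => q i,
    fun i => by rcases hq i with h | h | h <;> simp [h], fun z hz => ?_⟩
  choose n hn using hz
  obtain rfl : z = fun i => (n i : ℝ) := funext hn
  exact shiftSwap_bijOn hv hf hg hgf fun x hx hxA =>
    and_congr (hhalf x hx) (hA n x hx hxA)

theorem isTilewisePerm_patternSwaps (hl : 0 < l) (hT : 0 < T)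
    (hφ : BijOn φ (intLat l) (intLat l)) (hdist : ∀ x ∈ intLat l, dist (φ x) x ≤ T)
    (k : Fin (3 ^ l + 1)) : IsTilewisePerm l T (patternSwaps l T φ k) := by
  cases k using Fin.lastCases with
  | last =>
    rw [patternSwaps, Fin.snoc_last]
    exact isTilewisePerm_shiftSwap hl (mapsTo_id _) (mapsTo_id _) (invOn_id _) 0 (by simp)
      fun z x hx _ => (mem_tileSet_iff_forall_mem_block hx z 0).trans
        (add_halfDiag_mem_tileSet_iff hx z 0).symm
  | cast k =>
    rw [patternSwaps, Fin.snoc_castSucc]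
    exact isTilewisePerm_shiftSwap hl hφ.mapsTo hφ.surjOn.mapsTo_invFunOn hφ.invOn_invFunOn _
      (tileOffset_mem _) fun z x hx (hxk : blockPattern T φ x = _) => hxk ▸
        mem_tileSet_iff_map_add_halfDiag_mem hT hx (hφ.mapsTo hx) (hdist x hx) z

theorem foldl_patternSwaps (hl : 0 < l) (hφ : BijOn φ (intLat l) (intLat l))
    {x : EuclideanSpace ℝ (Fin l)} (hx : x ∈ intLat l) :
    (List.ofFn (patternSwaps l T φ)).foldl (fun y g => g y) x = φ x := by
  have hv := add_halfDiag_notMem_intLat hl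
  rw [List.ofFn_succ', List.concat_eq_append, List.foldl_append]
  simp only [patternSwaps, Fin.snoc_castSucc, Fin.snoc_last, List.foldl_cons, List.foldl_nil]
  rw [foldl_ofFn_shiftSwap_fiber hv hφ.mapsTo hφ.invOn_invFunOn.1 _ _ hx]
  exact shiftSwap_add_of_mem hv (mapsTo_id _) (leftInvOn_id _) (hφ.mapsTo hx) (mem_univ _)

end TilewisePerm

theorem stmt17 (l T : ℕ) (φ : EuclideanSpace ℝ (Fin l) → EuclideanSpace ℝ (Fin l))
    (hφ : Set.BijOn φ (intLat l) (intLat l))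
    (hdist : ∀ x ∈ intLat l, dist (φ x) x ≤ T) :
    ∃ σ : Fin (3 ^ l + 1) →
        (EuclideanSpace ℝ (Fin l) → EuclideanSpace ℝ (Fin l)),
      (∀ k, Set.BijOn (σ k) (halfLat l) (halfLat l)) ∧
      (∀ k, ∃ q : Fin l → ℝ, (∀ i, q i = -1 ∨ q i = 0 ∨ q i = 1) ∧
        ∀ z : Fin l → ℝ, (∀ i, ∃ n : ℤ, z i = n) →
          Set.BijOn (σ k) (halfLat l ∩ tileSet l T z q)
            (halfLat l ∩ tileSet l T z q)) ∧
      (∀ x ∈ intLat l, φ x = (List.ofFn σ).foldl (fun y g => g y) x) := by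
  by_cases hdeg : l = 0 ∨ T = 0
  · refine ⟨fun _ => id, fun _ => bijOn_id _, fun _ => ⟨0, by simp, fun _ _ => bijOn_id _⟩,
      fun x hx => ?_⟩
    rw [foldl_eq_self_of_forall_mem (by simp)]
    rcases hdeg with rfl | rfl
    · exact Subsingleton.elim _ _
    · exact dist_le_zero.mp (by exact_mod_cast hdist x hx)
  obtain ⟨hl, hT⟩ : 0 < l ∧ 0 < T := by omega
  have hσ := isTilewisePerm_patternSwaps hl hT hφ hdist
  exact ⟨patternSwaps l T φ, fun k => (hσ k).1, fun k => (hσ k).2,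
    fun x hx => (foldl_patternSwaps hl hφ hx).symm⟩

end
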